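/- arXiv:math/0402294 — 2 statements merged into one kernel-verified Lean document; each statement's English description precedes it below -/
import Mathlib

section
/- For any orthonormal vectors v₁, …, v_{2n+1} ∈ m one has |Φ(v₁,…,v_{2n+1})| ≤ (2n)!, and equality is attained: Φ(F₁₂, F₁₃, F₁₄, …, F₁,₂ₙ₊₂) = (2n)!. (This is the comass computation for the calibration Φ = Te(ω) ∧ e(Ω*) on the flag manifold F_o(1,2,ℝ^{2n+2}) = T₁(S^{2n+1}): the maximum is achieved only on (2n+1)-planes having one vertical direction.) -/
/-!
Write `t = X₁₂` and `z_k = X_{1k} + i X_{2k}` (`3 ≤ k ≤ 2n+2`) for the coordinates of `X ∈ m`.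
Then `Ω*_{kl}(X, Y) = Re (z_k(X) z̄_l(Y) - z_l(X) z̄_k(Y))`. Expanding the real parts and the
antisymmetrisations, each of the resulting terms is carried to a single one by precomposing the
permutations `σ` of the `E*`-sum and `τ` of the wedge product with transpositions inside the pairs,
so that `Φ(v) = ∑_σ sgn σ · det D_σ(v)`, where the row `a` of `D_σ(v)` is
`(t, z_{σ 3}, z̄_{σ 4}, z_{σ 5}, …)(v_a)`. For orthonormal `v_a ∈ m` these rows are unit vectors of
`ℂ^{2n+1}`, so `|det D_σ(v)| ≤ 1` by Hadamard's inequality and `|Φ(v)| ≤ (2n)!`. For the frame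
`F₁₂, F₁₃, …, F₁,₂ₙ₊₂` every `D_σ` is a permutation matrix of sign `sgn σ`, so all `(2n)!`
terms equal `1`.
-/

open Matrix

/-- column embedding `{3,…,2n+2}` (0-indexed: `k ↦ k + 2`). -/
def col (n : ℕ) (k : Fin (2 * n)) : Fin (2 * n + 2) := ⟨k.1 + 2, by have := k.isLt; omega⟩

/-- `Ω* k l (X, Y) = ∑_{i=1}^{2} (X_{ik} Y_{il} − X_{il} Y_{ik})`, columns in `{3,…,2n+2}`. -/
noncomputable def Omst (n : ℕ) (k l : Fin (2 * n))
    (X Y : Matrix (Fin (2 * n + 2)) (Fin (2 * n + 2)) ℝ) : ℝ :=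
  ∑ i : Fin 2, (X (i.castLE (by omega)) (col n k) * Y (i.castLE (by omega)) (col n l)
    - X (i.castLE (by omega)) (col n l) * Y (i.castLE (by omega)) (col n k))

/-- `Φ = μ₁₂ ∧ E*`, an alternating (2n+1)-form, via the shuffle convention. -/
noncomputable def Phi (n : ℕ) (v : Fin (2 * n + 1) → Matrix (Fin (2 * n + 2)) (Fin (2 * n + 2)) ℝ) :
    ℝ :=
  ∑ σ : Equiv.Perm (Fin (2 * n)), ((Equiv.Perm.sign σ : ℤ) : ℝ) *
    ((1 / 2 ^ n : ℝ) * ∑ τ : Equiv.Perm (Fin (2 * n + 1)), ((Equiv.Perm.sign τ : ℤ) : ℝ) *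
      ((v (τ ⟨0, by omega⟩) ⟨0, by omega⟩ ⟨1, by omega⟩) *
        ∏ j : Fin n,
          Omst n (σ ⟨2 * j.1, by have := j.isLt; omega⟩) (σ ⟨2 * j.1 + 1, by have := j.isLt; omega⟩)
            (v (τ ⟨2 * j.1 + 1, by have := j.isLt; omega⟩))
            (v (τ ⟨2 * j.1 + 2, by have := j.isLt; omega⟩))))

/-- Elementary skew-symmetric matrix `F i j` (for `i < j`). -/
noncomputable def Fskew (n : ℕ) (i j : Fin (2 * n + 2)) :
    Matrix (Fin (2 * n + 2)) (Fin (2 * n + 2)) ℝ :=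
  Matrix.of fun a b => if a = i ∧ b = j then 1 else if a = j ∧ b = i then -1 else 0

open Equiv Finset ComplexConjugate

-- Hadamard's inequality for rows of norm at most one: `|det A|² = ∏ λᵢ ≤ exp (∑ (λᵢ - 1)) ≤ 1`
-- for the eigenvalues `λᵢ ≥ 0` of `A Aᴴ`, whose sum is `tr (A Aᴴ) ≤ card ι`.
open scoped ComplexOrder in
theorem Matrix.norm_det_le_one_of_sum_norm_sq_le_one {𝕜 ι : Type*} [RCLike 𝕜] [Fintype ι]
    [DecidableEq ι] (A : Matrix ι ι 𝕜) (hA : ∀ i, ∑ j, ‖A i j‖ ^ 2 ≤ 1) : ‖A.det‖ ≤ 1 := by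
  have hB := A.posSemidef_self_mul_conjTranspose
  set μ := hB.isHermitian.eigenvalues
  have hdet : ‖A.det‖ ^ 2 = ∏ i, μ i := by
    have h := hB.isHermitian.det_eq_prod_eigenvalues
    rw [det_mul, det_conjTranspose, RCLike.star_def, RCLike.mul_conj, ← RCLike.ofReal_prod] at h
    exact_mod_cast h
  have htrace : ∑ i, μ i ≤ Fintype.card ι := by
    have h := hB.isHermitian.trace_eq_sum_eigenvalues
    have : (A * Aᴴ).trace = ((∑ i, ∑ j, ‖A i j‖ ^ 2 : ℝ) : 𝕜) := by
      simp [trace, mul_apply, RCLike.mul_conj]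
    rw [this, ← RCLike.ofReal_sum, RCLike.ofReal_inj] at h
    rw [← h]
    simpa using sum_le_sum fun i (_ : i ∈ univ) => hA i
  have hprod : ∏ i, μ i ≤ Real.exp (∑ i, (μ i - 1)) := by
    rw [Real.exp_sum]
    exact prod_le_prod (fun i _ => hB.eigenvalues_nonneg i)
      fun i _ => by linarith [Real.add_one_le_exp (μ i - 1)]
  have hexp : Real.exp (∑ i, (μ i - 1)) ≤ 1 := by
    rw [Real.exp_le_one_iff, sum_sub_distrib]
    simpa using htrace
  exact (pow_le_one_iff_of_nonneg (norm_nonneg _) two_ne_zero).mp (hdet ▸ hprod.trans hexp)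

namespace FlagCalibration

section PairFlip

variable {ι R : Type*} [DecidableEq ι] [CommRing R] {n : ℕ}

def pairFlip (e : Fin n × Fin 2 ↪ ι) (ε : Fin n → Bool) : Perm ι :=
  Perm.extendDomain (prodCongrRight fun j => if ε j then swap 0 1 else 1) e.toEquivRange

variable (e : Fin n × Fin 2 ↪ ι) (ε : Fin n → Bool)

lemma pairFlip_apply_of_notMem {i : ι} (hi : i ∉ Set.range e) : pairFlip e ε i = i :=
  Perm.extendDomain_apply_not_subtype _ _ hi

lemma pairFlip_apply_embedding (x : Fin n × Fin 2) :
    pairFlip e ε (e x) = e (x.1, if ε x.1 then swap 0 1 x.2 else x.2) := by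
  have h := Perm.extendDomain_apply_image
    (prodCongrRight fun j => if ε j then swap (0 : Fin 2) 1 else 1) e.toEquivRange x
  simp only [Function.Embedding.toEquivRange_apply] at h
  rw [pairFlip, h, prodCongrRight_apply]
  split_ifs <;> rfl

lemma sign_pairFlip [Fintype ι] : (Perm.sign (pairFlip e ε) : R) = ∏ j, if ε j then -1 else 1 := by
  rw [pairFlip, Perm.sign_extendDomain, Perm.sign_prodCongrRight]
  push_cast
  refine prod_congr rfl fun j _ => ?_
  split_ifs <;> simp

lemma prod_sub_eq_sum_prod_ite {κ : Type*} [Fintype κ] [DecidableEq κ] (a b : κ → R) :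
    ∏ j, (a j - b j) = ∑ ε : κ → Bool, ∏ j, if ε j then -b j else a j := by
  rw [← Fintype.prod_sum fun j (t : Bool) => if t then -b j else a j]
  simp [sub_eq_add_neg, add_comm]

theorem sum_sign_mul_prod_sub_swap [Fintype ι] (c : Perm ι → R)
    (hc : ∀ τ π : Perm ι, (∀ i ∉ Set.range e, π i = i) → c (τ * π) = c τ)
    (g : Fin n → ι → ι → R) :
    ∑ τ : Perm ι, (Perm.sign τ : R) * (c τ *
        ∏ j, (g j (τ (e (j, 0))) (τ (e (j, 1))) - g j (τ (e (j, 1))) (τ (e (j, 0)))))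
      = 2 ^ n *
        ∑ τ : Perm ι, (Perm.sign τ : R) * (c τ * ∏ j, g j (τ (e (j, 0))) (τ (e (j, 1)))) := by
  set F : Perm ι → (Fin n → Bool) → R := fun τ ε => (Perm.sign τ : R) * (c τ *
    ∏ j, if ε j then -g j (τ (e (j, 1))) (τ (e (j, 0))) else g j (τ (e (j, 0))) (τ (e (j, 1))))
  -- precomposing with `pairFlip e ε` turns the `ε`-term of the expansion into the `0`-term
  have hflip (ε : Fin n → Bool) (τ : Perm ι) : F (τ * pairFlip e ε) ε = F τ fun _ => false := by
    have hsign : (∏ j, if ε j then (-1 : R) else 1) * (∏ j, if ε j then -1 else 1) = 1 := by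
      rw [← prod_mul_distrib]
      exact prod_eq_one fun j _ => by split_ifs <;> simp
    have hprod : (∏ j, if ε j then
          -g j ((τ * pairFlip e ε) (e (j, 1))) ((τ * pairFlip e ε) (e (j, 0)))
        else g j ((τ * pairFlip e ε) (e (j, 0))) ((τ * pairFlip e ε) (e (j, 1))))
        = (∏ j, if ε j then -1 else 1) * ∏ j, g j (τ (e (j, 0))) (τ (e (j, 1))) := by
      rw [← prod_mul_distrib]
      refine prod_congr rfl fun j _ => ?_
      simp only [Perm.mul_apply, pairFlip_apply_embedding]
      split_ifs <;> simp
    simp only [F, hprod, Perm.sign_mul, Units.val_mul, Int.cast_mul, sign_pairFlip,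
      hc τ _ fun i hi => pairFlip_apply_of_notMem e ε hi, Bool.false_eq_true, if_false]
    linear_combination (↑↑(Perm.sign τ) * c τ * ∏ j, g j (τ (e (j, 0))) (τ (e (j, 1)))) * hsign
  simp only [prod_sub_eq_sum_prod_ite, mul_sum]
  rw [sum_comm]
  change ∑ ε, ∑ τ, F τ ε = _
  rw [sum_congr rfl fun ε _ => (Equiv.sum_comp (Equiv.mulRight (pairFlip e ε)) (F · ε)).symm]
  simp only [coe_mulRight, hflip, sum_const, card_univ, Fintype.card_fun, Fintype.card_bool,
    Fintype.card_fin, nsmul_eq_mul]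
  simp [F, mul_sum]

end PairFlip

def pairEquiv (n : ℕ) : Fin n × Fin 2 ≃ Fin (2 * n) where
  toFun x := ⟨2 * x.1 + x.2, by omega⟩
  invFun m := (⟨m / 2, by omega⟩, ⟨m % 2, by omega⟩)
  left_inv x := by ext <;> simp <;> omega
  right_inv m := by ext; simp; omega

def shiftedPairs (n : ℕ) : Fin n × Fin 2 ↪ Fin (2 * n + 1) :=
  (pairEquiv n).toEmbedding.trans (Fin.succEmb _)

variable {n : ℕ}

def tCoord (X : Matrix (Fin (2 * n + 2)) (Fin (2 * n + 2)) ℝ) : ℝ := X 0 1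

def zCoord (X : Matrix (Fin (2 * n + 2)) (Fin (2 * n + 2)) ℝ) (k : Fin (2 * n)) : ℂ :=
  ⟨X 0 (col n k), X 1 (col n k)⟩

def hermProd (X Y : Matrix (Fin (2 * n + 2)) (Fin (2 * n + 2)) ℝ) (k l : Fin (2 * n)) : ℂ :=
  zCoord X k * conj (zCoord Y l)

lemma omst_eq_hermProd (k l : Fin (2 * n)) (X Y : Matrix (Fin (2 * n + 2)) (Fin (2 * n + 2)) ℝ) :
    (Omst n k l X Y : ℂ) = 2⁻¹ * ((hermProd X Y k l - hermProd X Y l k)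
      - (hermProd Y X k l - hermProd Y X l k)) := by
  have h1 : ((1 : Fin 2).castLE (by omega) : Fin (2 * n + 2)) = 1 := rfl
  apply Complex.ext <;> simp [Omst, hermProd, zCoord, Fin.sum_univ_two, h1] <;> ring

lemma phi_eq_sum_pairs (v : Fin (2 * n + 1) → Matrix (Fin (2 * n + 2)) (Fin (2 * n + 2)) ℝ) :
    Phi n v = ∑ σ : Perm (Fin (2 * n)), (Perm.sign σ : ℝ) * ((1 / 2 ^ n : ℝ) *
      ∑ τ : Perm (Fin (2 * n + 1)), (Perm.sign τ : ℝ) * (tCoord (v (τ 0)) *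
        ∏ j, Omst n (σ (pairEquiv n (j, 0))) (σ (pairEquiv n (j, 1)))
          (v (τ (shiftedPairs n (j, 0)))) (v (τ (shiftedPairs n (j, 1)))))) := rfl

variable (v : Fin (2 * n + 1) → Matrix (Fin (2 * n + 2)) (Fin (2 * n + 2)) ℝ)

noncomputable def frameMatrix (σ : Perm (Fin (2 * n))) :
    Matrix (Fin (2 * n + 1)) (Fin (2 * n + 1)) ℂ :=
  Matrix.of fun a => Fin.cons (tCoord (v a) : ℂ) fun m =>
    if ((pairEquiv n).symm m).2 = 0 then zCoord (v a) (σ m) else conj (zCoord (v a) (σ m))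

lemma det_frameMatrix (σ : Perm (Fin (2 * n))) :
    (frameMatrix v σ).det = ∑ τ : Perm (Fin (2 * n + 1)), (Perm.sign τ : ℂ) *
      (tCoord (v (τ 0)) * ∏ j, hermProd (v (τ (shiftedPairs n (j, 0))))
        (v (τ (shiftedPairs n (j, 1)))) (σ (pairEquiv n (j, 0))) (σ (pairEquiv n (j, 1)))) := by
  refine (det_apply _).trans (sum_congr rfl fun τ _ => ?_)
  rw [Units.smul_def, zsmul_eq_mul, Fin.prod_univ_succ, ← (pairEquiv n).prod_comp,
    Fintype.prod_prod_type]
  simp [frameMatrix, hermProd, shiftedPairs, Fin.prod_univ_two]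

lemma zero_notMem_range_shiftedPairs : (0 : Fin (2 * n + 1)) ∉ Set.range (shiftedPairs n) := by
  rintro ⟨x, hx⟩
  exact Fin.succ_ne_zero _ hx

lemma sum_sign_mul_prod_omst (σ : Perm (Fin (2 * n))) :
    ∑ τ : Perm (Fin (2 * n + 1)), (Perm.sign τ : ℂ) * (tCoord (v (τ 0)) *
      ∏ j, (Omst n (σ (pairEquiv n (j, 0))) (σ (pairEquiv n (j, 1)))
        (v (τ (shiftedPairs n (j, 0)))) (v (τ (shiftedPairs n (j, 1)))) : ℂ))
    = ∑ τ : Perm (Fin (2 * n + 1)), (Perm.sign τ : ℂ) * (tCoord (v (τ 0)) *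
      ∏ j, (hermProd (v (τ (shiftedPairs n (j, 0)))) (v (τ (shiftedPairs n (j, 1))))
          (σ (pairEquiv n (j, 0))) (σ (pairEquiv n (j, 1)))
        - hermProd (v (τ (shiftedPairs n (j, 0)))) (v (τ (shiftedPairs n (j, 1))))
          (σ (pairEquiv n (j, 1))) (σ (pairEquiv n (j, 0))))) := by
  have h := sum_sign_mul_prod_sub_swap (shiftedPairs n) (fun τ => (tCoord (v (τ 0)) : ℂ))
    (fun τ π hπ => by rw [Perm.mul_apply, hπ 0 zero_notMem_range_shiftedPairs])
    (fun j a b => hermProd (v a) (v b) (σ (pairEquiv n (j, 0))) (σ (pairEquiv n (j, 1)))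
      - hermProd (v a) (v b) (σ (pairEquiv n (j, 1))) (σ (pairEquiv n (j, 0))))
  simp only [omst_eq_hermProd, prod_mul_distrib, prod_const, card_univ, Fintype.card_fin,
    mul_left_comm _ ((2 : ℂ)⁻¹ ^ n), ← mul_sum]
  rw [h, ← mul_assoc, ← mul_pow, inv_mul_cancel₀ two_ne_zero, one_pow, one_mul]

lemma sum_sign_mul_hermProd_sub :
    ∑ σ : Perm (Fin (2 * n)), (Perm.sign σ : ℂ) * ∑ τ : Perm (Fin (2 * n + 1)),
      (Perm.sign τ : ℂ) * (tCoord (v (τ 0)) *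
        ∏ j, (hermProd (v (τ (shiftedPairs n (j, 0)))) (v (τ (shiftedPairs n (j, 1))))
            (σ (pairEquiv n (j, 0))) (σ (pairEquiv n (j, 1)))
          - hermProd (v (τ (shiftedPairs n (j, 0)))) (v (τ (shiftedPairs n (j, 1))))
            (σ (pairEquiv n (j, 1))) (σ (pairEquiv n (j, 0)))))
    = 2 ^ n * ∑ σ : Perm (Fin (2 * n)), (Perm.sign σ : ℂ) * (frameMatrix v σ).det := by
  have h τ := sum_sign_mul_prod_sub_swap (pairEquiv n).toEmbedding
    (fun _ => (Perm.sign τ : ℂ) * tCoord (v (τ 0))) (fun _ _ _ => rfl)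
    (fun j => hermProd (v (τ (shiftedPairs n (j, 0)))) (v (τ (shiftedPairs n (j, 1)))))
  simp only [Equiv.coe_toEmbedding] at h
  simp only [det_frameMatrix, mul_sum]
  rw [sum_comm, sum_comm (γ := Perm (Fin (2 * n)))]
  refine sum_congr rfl fun τ _ => ?_
  rw [← mul_sum]
  simpa only [mul_assoc] using h τ

theorem phi_eq_sum_sign_mul_det :
    (Phi n v : ℂ) = ∑ σ : Perm (Fin (2 * n)), (Perm.sign σ : ℂ) * (frameMatrix v σ).det := by
  rw [phi_eq_sum_pairs]
  push_cast
  simp only [sum_sign_mul_prod_omst, mul_left_comm _ (1 / 2 ^ n : ℂ), ← mul_sum,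
    sum_sign_mul_hermProd_sub]
  rw [one_div, inv_mul_cancel_left₀ (pow_ne_zero n two_ne_zero)]

lemma sum_norm_sq_frameMatrix (σ : Perm (Fin (2 * n))) (a : Fin (2 * n + 1)) :
    ∑ i, ‖frameMatrix v σ a i‖ ^ 2 = tCoord (v a) ^ 2 + ∑ k, ‖zCoord (v a) k‖ ^ 2 := by
  rw [Fin.sum_univ_succ, ← Equiv.sum_comp σ fun k => ‖zCoord (v a) k‖ ^ 2]
  congr 1
  · simp [frameMatrix]
  · refine sum_congr rfl fun m _ => ?_
    simp only [frameMatrix, Matrix.of_apply, Fin.cons_succ]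
    split_ifs <;> simp

lemma sum_upper_mul_self_eq (X : Matrix (Fin (2 * n + 2)) (Fin (2 * n + 2)) ℝ)
    (hX : ∀ i j : Fin (2 * n + 2), 2 ≤ i.1 ∧ 2 ≤ j.1 → X i j = 0) :
    (∑ i, ∑ j, if i < j then X i j * X i j else 0) = tCoord X ^ 2 + ∑ k, ‖zCoord X k‖ ^ 2 := by
  simp only [Fin.sum_univ_succ (n := 2 * n + 1), Fin.sum_univ_succ (n := 2 * n)]
  have hcol (k : Fin (2 * n)) : col n k = k.succ.succ := rfl
  have hX' (k l : Fin (2 * n)) : X k.succ.succ l.succ.succ = 0 := hX _ _ ⟨by simp, by simp⟩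
  have h1 (k : Fin (2 * n)) : (1 : Fin (2 * n + 2)) < k.succ.succ := by simp [Fin.lt_def]
  simp [hX', hcol, h1, tCoord, zCoord, Complex.sq_norm, Complex.normSq_mk, sum_add_distrib,
    Fin.succ_pos]
  ring

theorem abs_phi_le_factorial (hv : ∀ a, ∀ i j : Fin (2 * n + 2), 2 ≤ i.1 ∧ 2 ≤ j.1 → v a i j = 0)
    (hunit : ∀ a, (∑ i, ∑ j, if i < j then v a i j * v a i j else 0) = 1) :
    |Phi n v| ≤ (2 * n).factorial := by
  have hdet (σ : Perm (Fin (2 * n))) : ‖(frameMatrix v σ).det‖ ≤ 1 :=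
    Matrix.norm_det_le_one_of_sum_norm_sq_le_one _ fun a => by
      rw [sum_norm_sq_frameMatrix, ← sum_upper_mul_self_eq _ (hv a), hunit a]
  calc |Phi n v| = ‖(Phi n v : ℂ)‖ := (Complex.norm_real _).symm
    _ ≤ ∑ σ : Perm (Fin (2 * n)), ‖(Perm.sign σ : ℂ) * (frameMatrix v σ).det‖ := by
      rw [phi_eq_sum_sign_mul_det]
      exact norm_sum_le _ _
    _ ≤ ∑ σ : Perm (Fin (2 * n)), 1 :=
      sum_le_sum fun σ _ => by simpa [abs_unit_intCast] using hdet σ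
    _ = (2 * n).factorial := by simp [Fintype.card_perm]

lemma frameMatrix_fskew (σ : Perm (Fin (2 * n))) :
    frameMatrix (fun a => Fskew n 0 a.succ) σ
      = (1 : Matrix (Fin (2 * n + 1)) (Fin (2 * n + 1)) ℂ).submatrix id
        (Perm.decomposeFin.symm (0, σ)) := by
  have hcol (k : Fin (2 * n)) : col n k = k.succ.succ := rfl
  have hone (a : Fin (2 * n + 1)) : (1 : Fin (2 * n + 2)) = a.succ ↔ a = 0 := by
    rw [← Fin.succ_zero_eq_one, Fin.succ_inj, eq_comm]
  ext a i
  refine Fin.cases ?_ (fun m => ?_) i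
  · simp [frameMatrix, Fskew, tCoord, Matrix.one_apply, hone, apply_ite ((↑) : ℝ → ℂ)]
  · have hz : zCoord (Fskew n 0 a.succ) (σ m) = if a = (σ m).succ then 1 else 0 := by
      apply Complex.ext <;> simp [zCoord, Fskew, hcol, hone, eq_comm, (Fin.succ_ne_zero _).symm,
        apply_ite Complex.re, apply_ite Complex.im]
    simp [frameMatrix, Matrix.one_apply, hz, apply_ite (starRingEnd ℂ),
      Perm.decomposeFin_symm_apply_succ]

theorem phi_fskew : Phi n (fun a => Fskew n 0 a.succ) = (2 * n).factorial := by
  apply Complex.ofReal_injective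
  rw [phi_eq_sum_sign_mul_det]
  simp [frameMatrix_fskew, det_permute', Perm.decomposeFin.symm_sign, Fintype.card_perm,
    ← Int.cast_mul, ← Units.val_mul]

end FlagCalibration

theorem stmt_13 (n : ℕ) :
    (∀ v : Fin (2 * n + 1) → Matrix (Fin (2 * n + 2)) (Fin (2 * n + 2)) ℝ,
      (∀ a, (v a)ᵀ = -(v a)) →
      (∀ a, ∀ i j : Fin (2 * n + 2), 2 ≤ i.1 ∧ 2 ≤ j.1 → v a i j = 0) →
      (∀ a b, (∑ i : Fin (2 * n + 2), ∑ j : Fin (2 * n + 2), if i < j then v a i j * v b i j else 0)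
        = if a = b then 1 else 0) →
      |Phi n v| ≤ (Nat.factorial (2 * n) : ℝ)) ∧
    Phi n (fun a => Fskew n ⟨0, by omega⟩ ⟨a.1 + 1, by have := a.isLt; omega⟩) =
      (Nat.factorial (2 * n) : ℝ) := by
  refine ⟨fun v _ hv horth => ?_, FlagCalibration.phi_fskew⟩
  exact FlagCalibration.abs_phi_le_factorial v hv fun a => by simpa using horth a a
end

section
/- Let V be the real vector space of 8×8 real matrices. For any orthonormal vectors v₁, …, v₈ ∈ V (so that ξ = v₁ ∧ ⋯ ∧ v₈ is a decomposable unit 8-vector), one has (Σ_{i=1}^{8} ξ_{i,i,…,i})² ≤ 1, where ξ_{i,…,i} is the Plücker coordinate with all row indices equal to i. -/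
/-!
Write `W i` for the square matrix `(W i)_{ab} = (v_b)_{i,a}`, so that `ξ_{i,…,i} = det (W i)`.
AM–GM applied to the eigenvalues of `(W i)ᵀ (W i)` gives `ξ_{i,…,i}² ≤ (‖W i‖² / 8)^8`, where
`‖·‖` is the Frobenius norm. The squared norms `‖W i‖²` add up to `∑_b ‖v_b‖² = 8`, so each
ratio `‖W i‖² / 8` lies in `[0, 1]`; hence `|ξ_{i,…,i}| ≤ ‖W i‖² / 8`, and these bounds sum to `1`.
-/

/-- Plücker coordinate `ξ_{i₁,…,i₈} := det M`, `M_{ab} = (v_b)_{i_a, a}`. -/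
noncomputable def xi (v : Fin 8 → (Fin 8 → Fin 8 → ℝ)) (i : Fin 8 → Fin 8) : ℝ :=
  Matrix.det (Matrix.of fun a b => v b (i a) a)

open Matrix Finset

theorem Real.prod_le_arith_mean_pow {ι : Type*} (s : Finset ι) {z : ι → ℝ}
    (hz : ∀ i ∈ s, 0 ≤ z i) : ∏ i ∈ s, z i ≤ ((∑ i ∈ s, z i) / #s) ^ #s := by
  rcases s.eq_empty_or_nonempty with rfl | hs
  · simp
  have hcard : #s ≠ 0 := hs.card_ne_zero
  have hprod : 0 ≤ ∏ i ∈ s, z i := prod_nonneg hz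
  have hamgm : ∏ i ∈ s, z i ^ ((#s : ℝ)⁻¹) ≤ ∑ i ∈ s, (#s : ℝ)⁻¹ * z i :=
    Real.geom_mean_le_arith_mean_weighted s _ z (fun _ _ => by positivity)
      (by simp [hcard]) hz
  rw [Real.finsetProd_rpow s z hz, ← mul_sum, inv_mul_eq_div] at hamgm
  calc ∏ i ∈ s, z i = ((∏ i ∈ s, z i) ^ ((#s : ℝ)⁻¹)) ^ #s :=
        (Real.rpow_inv_natCast_pow hprod hcard).symm
    _ ≤ ((∑ i ∈ s, z i) / #s) ^ #s := by gcongr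

theorem Matrix.det_sq_le_sum_sq_div_card_pow {n : Type*} [Fintype n] [DecidableEq n]
    (B : Matrix n n ℝ) :
    B.det ^ 2 ≤ ((∑ j, ∑ i, B i j ^ 2) / Fintype.card n) ^ Fintype.card n := by
  have hA : (Bᵀ * B).PosSemidef := by
    simpa using posSemidef_conjTranspose_mul_self B
  have hdet : B.det ^ 2 = ∏ k, hA.isHermitian.eigenvalues k := by
    rw [show B.det ^ 2 = (Bᵀ * B).det by rw [det_mul, det_transpose, sq],
      hA.isHermitian.det_eq_prod_eigenvalues]
    simp
  have htrace : ∑ j, ∑ i, B i j ^ 2 = ∑ k, hA.isHermitian.eigenvalues k := by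
    have htr : (Bᵀ * B).trace = ∑ j, ∑ i, B i j ^ 2 := by
      simp only [trace, diag, mul_apply, transpose_apply, sq]
    rw [← htr, hA.isHermitian.trace_eq_sum_eigenvalues]
    simp
  rw [hdet, htrace]
  exact Real.prod_le_arith_mean_pow univ fun k _ => hA.eigenvalues_nonneg k

theorem abs_le_of_sq_le_pow {d s : ℝ} {n : ℕ} (hs₀ : 0 ≤ s) (hs₁ : s ≤ 1) (hn : 2 ≤ n)
    (h : d ^ 2 ≤ s ^ n) : |d| ≤ s :=
  abs_le_of_sq_le_sq (h.trans (pow_le_pow_of_le_one hs₀ hs₁ hn)) hs₀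

theorem abs_sum_det_slices_le_one {ι n : Type*} [Fintype ι] [Fintype n] [DecidableEq n]
    (hn : 2 ≤ Fintype.card n) (v : n → ι → n → ℝ) (hv : ∀ b, ∑ i, ∑ k, v b i k ^ 2 = 1) :
    |∑ i, (of fun a b => v b i a).det| ≤ 1 := by
  set N : ℝ := (Fintype.card n : ℝ) with hN_def
  have hN : 0 < N := by rw [hN_def]; exact_mod_cast (by omega : 0 < Fintype.card n)
  set t : ι → ℝ := fun i => ∑ b, ∑ a, v b i a ^ 2
  have ht_nonneg : ∀ i, 0 ≤ t i := fun i => by positivity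
  have ht_sum : ∑ i, t i = N := by
    calc ∑ i, t i = ∑ b, ∑ i, ∑ a, v b i a ^ 2 := sum_comm
      _ = N := by simp [hv, hN_def]
  have hdet : ∀ i, |(of fun a b => v b i a).det| ≤ t i / N := fun i =>
    abs_le_of_sq_le_pow (by positivity)
      ((div_le_one hN).2 (ht_sum ▸ single_le_sum (fun j _ => ht_nonneg j) (mem_univ i))) hn
      (det_sq_le_sum_sq_div_card_pow _)
  calc |∑ i, (of fun a b => v b i a).det| ≤ ∑ i, |(of fun a b => v b i a).det| :=
        abs_sum_le_sum_abs _ _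
    _ ≤ ∑ i, t i / N := sum_le_sum fun i _ => hdet i
    _ = 1 := by rw [← sum_div, ht_sum, div_self hN.ne']

theorem stmt_17 (v : Fin 8 → (Fin 8 → Fin 8 → ℝ))
    (hv : ∀ a b, (∑ i : Fin 8, ∑ k : Fin 8, v a i k * v b i k) = if a = b then 1 else 0) :
    (∑ i : Fin 8, xi v (fun _ => i)) ^ 2 ≤ 1 := by
  rw [sq_le_one_iff_abs_le_one]
  exact abs_sum_det_slices_le_one (by simp) v fun b => by simpa [sq] using hv b b
end
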